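/- Let m ≥ 3, 2 ≤ k ≤ m, and 0 ≤ σ ≤ δ. There exists a constant C such that ‖f·g‖_{k,δ} ≤ C·‖f‖_{m,δ}·‖g‖_{k,σ} for all f ∈ H^{m,δ}(ℝ⁺×S¹) and g ∈ H^{k,σ}(ℝ⁺×S¹), where ‖f‖²_{k,δ} = Σ_{|α|≤k} ∫ |D^α f(s,t)|² e^{2δs} ds dt. -/

import Mathlib

/-!
By Leibniz's rule, `D^j (f g)` is bounded by the products `D^i f · D^i' g` with `i + i' ≤ k`.
In each product one factor carries few derivatives: either `i' ≤ k - 2`, or `i ≤ 1 ≤ m - 2`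
(this is where `m ≥ 3` enters). That factor is bounded pointwise, with its weight, by the Sobolev
embedding `H² ↪ L^∞` on unit squares of the cylinder, itself obtained by applying the
one-dimensional estimate `‖u a‖² ≤ 2 ∫ (‖u‖² + ‖u'‖²)` on unit intervals in both directions.
The other factor stays in `L²`; the weights combine through `e^{2δs} ≤ e^{2δs} e^{2σs}`.
-/

open Filter MeasureTheory

noncomputable section

/-- square of the exponentially weighted Sobolev norm
`‖f‖²_{k,δ} = ∑_{|α|≤k} ∫_{ℝ⁺×S¹} |D^α f|² e^{2δs}` on the half-cylinder
(functions on `ℝ²`, 1-periodic in the second variable) -/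
def wNormSq (k : ℕ) (δ : ℝ) (f : ℝ × ℝ → ℝ) : ℝ :=
  ∑ j ∈ Finset.range (k + 1),
    ∫ x in Set.Ioi (0 : ℝ) ×ˢ Set.Ioo (0 : ℝ) 1,
      ‖iteratedFDeriv ℝ j f x‖ ^ 2 * Real.exp (2 * δ * x.1)

/-- membership in `H^{k,δ}(ℝ⁺ × S¹)` (smooth representatives) -/
def memW (k : ℕ) (δ : ℝ) (f : ℝ × ℝ → ℝ) : Prop :=
  ContDiff ℝ (k : ℕ∞) f ∧ (∀ s t : ℝ, f (s, t + 1) = f (s, t)) ∧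
    ∀ j ≤ k, IntegrableOn
      (fun x => ‖iteratedFDeriv ℝ j f x‖ ^ 2 * Real.exp (2 * δ * x.1))
      (Set.Ioi (0 : ℝ) ×ˢ Set.Ioo (0 : ℝ) 1)

open Set
open scoped Interval

theorem sq_intervalIntegral_le_intervalIntegral_sq {w : ℝ → ℝ} (hw : Continuous w) (b : ℝ) :
    (∫ x in b..b + 1, w x) ^ 2 ≤ ∫ x in b..b + 1, w x ^ 2 := by
  have hb : b ≤ b + 1 := by linarith
  have jensen := (even_two.convexOn_pow (𝕜 := ℝ)).map_set_average_le (continuous_pow 2).continuousOn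
    isClosed_univ (μ := volume) (t := Ioc b (b + 1)) (by simp) (by simp [Real.volume_Ioc])
    (ae_of_all _ fun _ => mem_univ _) hw.integrableOn_Ioc (hw.pow 2).integrableOn_Ioc
  simpa [setAverage_eq, intervalIntegral.integral_of_le hb] using jensen

theorem sq_norm_le_two_mul_intervalIntegral {E : Type*} [NormedAddCommGroup E] [NormedSpace ℝ E]
    [CompleteSpace E] {u u' : ℝ → E} {w : ℝ → ℝ} (hu : ∀ x, HasDerivAt u (u' x) x)
    (hu' : Continuous u') (hw : Continuous w) (hu'w : ∀ x, ‖u' x‖ ≤ w x) {a b : ℝ}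
    (ha : a ∈ Icc b (b + 1)) :
    ‖u a‖ ^ 2 ≤ 2 * ∫ x in b..b + 1, (‖u x‖ ^ 2 + w x ^ 2) := by
  have hb : b ≤ b + 1 := by linarith
  have hu_cont : Continuous u := continuous_iff_continuousAt.2 fun x => (hu x).continuousAt
  obtain ⟨y, hy, hmin⟩ := isCompact_Icc.exists_isMinOn (nonempty_Icc.2 hb)
    hu_cont.norm.continuousOn
  have hw_nonneg : ∀ x, 0 ≤ w x := fun x => (norm_nonneg _).trans (hu'w x)
  have h_min : ‖u y‖ ^ 2 ≤ ∫ x in b..b + 1, ‖u x‖ ^ 2 := by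
    simpa using intervalIntegral.integral_mono_on (μ := volume) hb intervalIntegrable_const
      ((hu_cont.norm.pow 2).intervalIntegrable _ _)
      fun x hx => pow_le_pow_left₀ (norm_nonneg _) (hmin hx) 2
  have h_osc : ‖u a - u y‖ ≤ ∫ x in b..b + 1, w x := by
    rw [← intervalIntegral.integral_eq_sub_of_hasDerivAt (fun x _ => hu x)
      (hu'.intervalIntegrable _ _), intervalIntegral.integral_of_le hb]
    calc ‖∫ x in y..a, u' x‖ = ‖∫ x in Ι y a, u' x‖ :=
          intervalIntegral.norm_integral_eq_norm_integral_uIoc _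
      _ ≤ ∫ x in Ι y a, ‖u' x‖ := norm_integral_le_integral_norm _
      _ ≤ ∫ x in Ι y a, w x :=
          setIntegral_mono_on hu'.norm.integrableOn_uIoc hw.integrableOn_uIoc
            measurableSet_uIoc fun x _ => hu'w x
      _ ≤ ∫ x in Ioc b (b + 1), w x := by
          refine setIntegral_mono_set hw.integrableOn_Ioc (ae_of_all _ hw_nonneg) ?_
          have hsub : [[y, a]] ⊆ [[b, b + 1]] := uIcc_subset_uIcc
            (mem_uIcc_of_le hy.1 hy.2) (mem_uIcc_of_le ha.1 ha.2)
          exact ((uIoc_subset_uIoc_of_uIcc_subset_uIcc hsub).trans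
            (uIoc_of_le hb).subset).eventuallyLE
  have h_sq := sq_intervalIntegral_le_intervalIntegral_sq hw b
  have h_tri : ‖u a‖ ≤ ‖u y‖ + ∫ x in b..b + 1, w x :=
    (norm_le_norm_add_norm_sub' _ _).trans (by gcongr)
  rw [intervalIntegral.integral_add (f := fun x => ‖u x‖ ^ 2) (g := fun x => w x ^ 2)
    ((hu_cont.norm.pow 2).intervalIntegrable _ _) ((hw.pow 2).intervalIntegrable _ _)]
  nlinarith [norm_nonneg (u a), norm_nonneg (u y), sq_nonneg (‖u y‖ - ∫ x in b..b + 1, w x)]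

theorem sq_norm_iteratedFDeriv_le_intervalIntegral {E F : Type*} [NormedAddCommGroup E]
    [NormedSpace ℝ E] [NormedAddCommGroup F] [NormedSpace ℝ F] [CompleteSpace F]
    {g : E → F} {n j : ℕ} (hg : ContDiff ℝ n g) (hj : j + 1 ≤ n) {γ : ℝ → E} {v : E}
    (hγ : ∀ r, HasDerivAt γ v r) (hv : ‖v‖ ≤ 1) {a b : ℝ} (ha : a ∈ Icc b (b + 1)) :
    ‖iteratedFDeriv ℝ j g (γ a)‖ ^ 2 ≤ 2 * ∫ r in b..b + 1,
      (‖iteratedFDeriv ℝ j g (γ r)‖ ^ 2 + ‖iteratedFDeriv ℝ (j + 1) g (γ r)‖ ^ 2) := by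
  have hC1 : ContDiff ℝ 1 (iteratedFDeriv ℝ j g) :=
    hg.iteratedFDeriv_right (by rw [add_comm]; exact_mod_cast hj)
  have hγ_cont : Continuous γ := continuous_iff_continuousAt.2 fun r => (hγ r).continuousAt
  refine sq_norm_le_two_mul_intervalIntegral
    (u' := fun r => fderiv ℝ (iteratedFDeriv ℝ j g) (γ r) v)
    (fun r => (hC1.differentiable one_ne_zero (γ r)).hasFDerivAt.comp_hasDerivAt r (hγ r))
    (((hC1.continuous_fderiv one_ne_zero).comp hγ_cont).clm_apply continuous_const)
    ((hg.continuous_iteratedFDeriv (by exact_mod_cast hj)).comp hγ_cont).norm (fun r => ?_) ha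
  calc ‖fderiv ℝ (iteratedFDeriv ℝ j g) (γ r) v‖
      ≤ ‖fderiv ℝ (iteratedFDeriv ℝ j g) (γ r)‖ * ‖v‖ := ContinuousLinearMap.le_opNorm _ _
    _ ≤ ‖iteratedFDeriv ℝ (j + 1) g (γ r)‖ := by
      rw [norm_fderiv_iteratedFDeriv]; exact mul_le_of_le_one_right (norm_nonneg _) hv

theorem setIntegral_Icc_prod_Icc {f : ℝ × ℝ → ℝ} (hf : Continuous f) {a b c d : ℝ}
    (hab : a ≤ b) (hcd : c ≤ d) :
    ∫ x in Icc a b ×ˢ Icc c d, f x = ∫ σ in a..b, ∫ τ in c..d, f (σ, τ) := by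
  rw [Measure.volume_eq_prod, setIntegral_prod f
      (hf.continuousOn.integrableOn_compact (isCompact_Icc.prod isCompact_Icc)),
    intervalIntegral.integral_of_le hab, integral_Icc_eq_integral_Ioc]
  congr 1 with σ
  rw [intervalIntegral.integral_of_le hcd, integral_Icc_eq_integral_Ioc]

theorem sq_norm_add_sq_norm_iteratedFDeriv_le_intervalIntegral {E F : Type*}
    [NormedAddCommGroup E] [NormedSpace ℝ E] [NormedAddCommGroup F] [NormedSpace ℝ F]
    [CompleteSpace F] {g : E → F} {n l : ℕ} (hg : ContDiff ℝ n g) (hl : l + 2 ≤ n) {γ : ℝ → E}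
    {v : E} (hγ : ∀ r, HasDerivAt γ v r) (hv : ‖v‖ ≤ 1) {a b : ℝ} (ha : a ∈ Icc b (b + 1)) :
    ‖iteratedFDeriv ℝ l g (γ a)‖ ^ 2 + ‖iteratedFDeriv ℝ (l + 1) g (γ a)‖ ^ 2
      ≤ 2 * ∫ r in b..b + 1, (‖iteratedFDeriv ℝ l g (γ r)‖ ^ 2
        + 2 * ‖iteratedFDeriv ℝ (l + 1) g (γ r)‖ ^ 2 + ‖iteratedFDeriv ℝ (l + 2) g (γ r)‖ ^ 2) := by
  have h0 := sq_norm_iteratedFDeriv_le_intervalIntegral (j := l) hg (by omega) hγ hv ha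
  have h1 := sq_norm_iteratedFDeriv_le_intervalIntegral (j := l + 1) hg (by omega) hγ hv ha
  have hγ_cont : Continuous γ := continuous_iff_continuousAt.2 fun r => (hγ r).continuousAt
  have hi : ∀ i ≤ n, IntervalIntegrable (fun r => ‖iteratedFDeriv ℝ i g (γ r)‖ ^ 2) volume b
      (b + 1) := fun i hi =>
    (((hg.continuous_iteratedFDeriv (by exact_mod_cast hi)).comp hγ_cont).norm.pow
      2).intervalIntegrable _ _
  have hsplit : ∫ r in b..b + 1, (‖iteratedFDeriv ℝ l g (γ r)‖ ^ 2
        + 2 * ‖iteratedFDeriv ℝ (l + 1) g (γ r)‖ ^ 2 + ‖iteratedFDeriv ℝ (l + 2) g (γ r)‖ ^ 2)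
      = (∫ r in b..b + 1, (‖iteratedFDeriv ℝ l g (γ r)‖ ^ 2
          + ‖iteratedFDeriv ℝ (l + 1) g (γ r)‖ ^ 2))
        + ∫ r in b..b + 1, (‖iteratedFDeriv ℝ (l + 1) g (γ r)‖ ^ 2
          + ‖iteratedFDeriv ℝ (l + 1 + 1) g (γ r)‖ ^ 2) := by
    rw [← intervalIntegral.integral_add ((hi l (by omega)).add (hi (l + 1) (by omega)))
      ((hi (l + 1) (by omega)).add (hi (l + 2) (by omega)))]
    congr 1 with r
    ring
  linarith

theorem sq_norm_iteratedFDeriv_le_setIntegral_Icc_prod_Icc {F : Type*} [NormedAddCommGroup F]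
    [NormedSpace ℝ F] [CompleteSpace F] {g : ℝ × ℝ → F} {n l : ℕ} (hg : ContDiff ℝ n g)
    (hl : l + 2 ≤ n) {s t b c : ℝ} (hs : s ∈ Icc b (b + 1)) (ht : t ∈ Icc c (c + 1)) :
    ‖iteratedFDeriv ℝ l g (s, t)‖ ^ 2 ≤ 4 * ∫ x in Icc b (b + 1) ×ˢ Icc c (c + 1),
      (‖iteratedFDeriv ℝ l g x‖ ^ 2 + 2 * ‖iteratedFDeriv ℝ (l + 1) g x‖ ^ 2
        + ‖iteratedFDeriv ℝ (l + 2) g x‖ ^ 2) := by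
  have horizontal := sq_norm_iteratedFDeriv_le_intervalIntegral (j := l) (γ := fun r => (r, t))
    hg (by omega) (fun r => (hasDerivAt_id r).prodMk (hasDerivAt_const r t)) (by simp) hs
  have vertical := fun σ => sq_norm_add_sq_norm_iteratedFDeriv_le_intervalIntegral hg hl
    (γ := fun τ => (σ, τ)) (fun r => (hasDerivAt_const r σ).prodMk (hasDerivAt_id r)) (by simp) ht
  set e : ℝ × ℝ → ℝ := fun x => ‖iteratedFDeriv ℝ l g x‖ ^ 2
    + 2 * ‖iteratedFDeriv ℝ (l + 1) g x‖ ^ 2 + ‖iteratedFDeriv ℝ (l + 2) g x‖ ^ 2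
  have hcont : ∀ i ≤ n, Continuous fun x => ‖iteratedFDeriv ℝ i g x‖ ^ 2 := fun i hi =>
    (hg.continuous_iteratedFDeriv (by exact_mod_cast hi)).norm.pow 2
  have he : Continuous e :=
    ((hcont l (by omega)).add (continuous_const.mul (hcont (l + 1) (by omega)))).add
      (hcont (l + 2) (by omega))
  have he_slices : Continuous fun σ => ∫ τ in c..c + 1, e (σ, τ) :=
    intervalIntegral.continuous_parametric_intervalIntegral_of_continuous'
      (f := fun σ τ => e (σ, τ)) he _ _
  calc ‖iteratedFDeriv ℝ l g (s, t)‖ ^ 2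
      ≤ 2 * ∫ σ in b..b + 1, (‖iteratedFDeriv ℝ l g (σ, t)‖ ^ 2
        + ‖iteratedFDeriv ℝ (l + 1) g (σ, t)‖ ^ 2) := horizontal
    _ ≤ 2 * ∫ σ in b..b + 1, 2 * ∫ τ in c..c + 1, e (σ, τ) := by
      gcongr
      refine intervalIntegral.integral_mono_on (by linarith)
        ((((hcont l (by omega)).add (hcont (l + 1) (by omega))).comp
          (continuous_id.prodMk continuous_const)).intervalIntegrable _ _)
        ((continuous_const.mul he_slices).intervalIntegrable _ _) fun σ _ => vertical σ
    _ = 4 * ∫ x in Icc b (b + 1) ×ˢ Icc c (c + 1), e x := by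
      rw [intervalIntegral.integral_const_mul,
        setIntegral_Icc_prod_Icc he (by linarith) (by linarith)]
      ring

theorem iteratedFDeriv_add_eq_of_periodic {𝕜 E F : Type*} [NontriviallyNormedField 𝕜]
    [NormedAddCommGroup E] [NormedSpace 𝕜 E] [NormedAddCommGroup F] [NormedSpace 𝕜 F]
    {f : E → F} {a : E} (hf : ∀ x, f (x + a) = f x) (n : ℕ) (x : E) :
    iteratedFDeriv 𝕜 n f (x + a) = iteratedFDeriv 𝕜 n f x := by
  rw [← iteratedFDeriv_comp_add_right, funext hf]

theorem iteratedFDeriv_fract {F : Type*} [NormedAddCommGroup F] [NormedSpace ℝ F]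
    {f : ℝ × ℝ → F} (hf : ∀ s t : ℝ, f (s, t + 1) = f (s, t)) (n : ℕ) (s t : ℝ) :
    iteratedFDeriv ℝ n f (s, Int.fract t) = iteratedFDeriv ℝ n f (s, t) := by
  have hper : Function.Periodic (fun τ => iteratedFDeriv ℝ n f (s, τ)) 1 := fun τ => by
    simpa using iteratedFDeriv_add_eq_of_periodic (a := ((0 : ℝ), (1 : ℝ)))
      (fun x => by
        rw [show x + ((0 : ℝ), (1 : ℝ)) = (x.1, x.2 + 1) from Prod.ext (add_zero _) rfl]
        exact hf x.1 x.2) n (s, τ)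
  simpa only [mul_one, Int.self_sub_floor] using hper.sub_int_mul_eq (x := t) ⌊t⌋

theorem add_two_mul_add_le_two_mul_sum {a : ℕ → ℝ} (ha : ∀ j, 0 ≤ a j) {l n : ℕ}
    (hl : l + 2 ≤ n) : a l + 2 * a (l + 1) + a (l + 2) ≤ 2 * ∑ j ∈ Finset.range (n + 1), a j := by
  have hsub : {l, l + 1, l + 2} ⊆ Finset.range (n + 1) := by
    intro j hj
    simp only [Finset.mem_insert, Finset.mem_singleton] at hj
    simp only [Finset.mem_range]
    omega
  have h3 := Finset.sum_le_sum_of_subset_of_nonneg hsub fun j _ _ => ha j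
  rw [Finset.sum_insert (by simp), Finset.sum_pair (by omega)] at h3
  have h1 : a (l + 1) ≤ ∑ j ∈ Finset.range (n + 1), a j :=
    Finset.single_le_sum (fun j _ => ha j) (Finset.mem_range.2 (by omega))
  linarith

abbrev halfCylinder : Set (ℝ × ℝ) := Set.Ioi 0 ×ˢ Set.Ioo 0 1

theorem measurableSet_halfCylinder : MeasurableSet halfCylinder :=
  measurableSet_Ioi.prod measurableSet_Ioo

def wDensity (k : ℕ) (δ : ℝ) (f : ℝ × ℝ → ℝ) (x : ℝ × ℝ) : ℝ :=
  ∑ j ∈ Finset.range (k + 1), ‖iteratedFDeriv ℝ j f x‖ ^ 2 * Real.exp (2 * δ * x.1)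

theorem wDensity_nonneg (k : ℕ) (δ : ℝ) (f : ℝ × ℝ → ℝ) (x : ℝ × ℝ) : 0 ≤ wDensity k δ f x :=
  Finset.sum_nonneg fun _ _ => by positivity

theorem sq_norm_iteratedFDeriv_mul_exp_le_wDensity {k j : ℕ} (hj : j ≤ k) (δ : ℝ)
    (f : ℝ × ℝ → ℝ) (x : ℝ × ℝ) :
    ‖iteratedFDeriv ℝ j f x‖ ^ 2 * Real.exp (2 * δ * x.1) ≤ wDensity k δ f x :=
  Finset.single_le_sum (f := fun j => ‖iteratedFDeriv ℝ j f x‖ ^ 2 * Real.exp (2 * δ * x.1))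
    (fun _ _ => by positivity) (Finset.mem_range.2 (by omega))

theorem wNormSq_nonneg (k : ℕ) (δ : ℝ) (f : ℝ × ℝ → ℝ) : 0 ≤ wNormSq k δ f :=
  Finset.sum_nonneg fun _ _ => setIntegral_nonneg measurableSet_halfCylinder
    fun _ _ => by positivity

namespace memW

variable {k : ℕ} {δ : ℝ} {f : ℝ × ℝ → ℝ}

theorem continuous_wDensity (hf : memW k δ f) : Continuous (wDensity k δ f) :=
  continuous_finsetSum _ fun j hj =>
    ((hf.1.continuous_iteratedFDeriv (by exact_mod_cast Finset.mem_range_succ_iff.1 hj)).norm.pow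
      2).mul (Real.continuous_exp.comp (continuous_const.mul continuous_fst))

theorem integrableOn_wDensity (hf : memW k δ f) : IntegrableOn (wDensity k δ f) halfCylinder :=
  integrable_finsetSum _ fun j hj => hf.2.2 j (Finset.mem_range_succ_iff.1 hj)

theorem integral_wDensity (hf : memW k δ f) :
    ∫ x in halfCylinder, wDensity k δ f x = wNormSq k δ f :=
  integral_finsetSum _ fun j hj => hf.2.2 j (Finset.mem_range_succ_iff.1 hj)

theorem setIntegral_wDensity_Icc_prod_Icc_le (hf : memW k δ f) {b : ℝ} (hb : 0 < b) :
    ∫ x in Icc b (b + 1) ×ˢ Icc 0 1, wDensity k δ f x ≤ wNormSq k δ f := by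
  have hae : (Icc b (b + 1) ×ˢ Icc 0 1 : Set (ℝ × ℝ)) =ᵐ[volume] Icc b (b + 1) ×ˢ Ioo 0 1 := by
    rw [Measure.volume_eq_prod]
    exact Measure.set_prod_ae_eq (ae_eq_refl _) Ioo_ae_eq_Icc.symm
  rw [← hf.integral_wDensity, setIntegral_congr_set hae]
  exact setIntegral_mono_set hf.integrableOn_wDensity (ae_of_all _ (wDensity_nonneg k δ f))
    (prod_mono (fun σ hσ => hb.trans_le hσ.1) le_rfl).eventuallyLE

theorem sq_norm_iteratedFDeriv_mul_exp_le (hf : memW k δ f) (hδ : 0 ≤ δ) {l : ℕ}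
    (hl : l + 2 ≤ k) {x : ℝ × ℝ} (hx : 0 < x.1) :
    ‖iteratedFDeriv ℝ l f x‖ ^ 2 * Real.exp (2 * δ * x.1) ≤ 8 * wNormSq k δ f := by
  -- periodicity moves the point into the unit square `[x.1, x.1 + 1] × [0, 1]`,
  -- which lies in the closure of the half-cylinder
  have hsquare := sq_norm_iteratedFDeriv_le_setIntegral_Icc_prod_Icc hf.1 hl (c := 0)
    (⟨le_rfl, by linarith⟩ : x.1 ∈ Icc x.1 (x.1 + 1))
    (⟨Int.fract_nonneg x.2, by linarith [Int.fract_lt_one x.2]⟩ : Int.fract x.2 ∈ Icc 0 (0 + 1))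
  rw [iteratedFDeriv_fract hf.2.1, zero_add] at hsquare
  set e : ℝ × ℝ → ℝ := fun y => ‖iteratedFDeriv ℝ l f y‖ ^ 2
    + 2 * ‖iteratedFDeriv ℝ (l + 1) f y‖ ^ 2 + ‖iteratedFDeriv ℝ (l + 2) f y‖ ^ 2
  have he : Continuous e := by
    have hc : ∀ i ≤ k, Continuous fun y => ‖iteratedFDeriv ℝ i f y‖ ^ 2 := fun i hi =>
      (hf.1.continuous_iteratedFDeriv (by exact_mod_cast hi)).norm.pow 2
    exact ((hc l (by omega)).add (continuous_const.mul (hc (l + 1) (by omega)))).add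
      (hc (l + 2) (by omega))
  have hcompact : IsCompact (Icc x.1 (x.1 + 1) ×ˢ Icc (0 : ℝ) 1) := isCompact_Icc.prod isCompact_Icc
  have hpointwise : ∀ y ∈ Icc x.1 (x.1 + 1) ×ˢ Icc (0 : ℝ) 1,
      e y * Real.exp (2 * δ * x.1) ≤ 2 * wDensity k δ f y := by
    intro y hy
    have he_nonneg : 0 ≤ e y := by positivity
    calc e y * Real.exp (2 * δ * x.1) ≤ e y * Real.exp (2 * δ * y.1) :=
          mul_le_mul_of_nonneg_left (Real.exp_le_exp.2 (by nlinarith [hy.1.1])) he_nonneg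
      _ ≤ 2 * wDensity k δ f y := by
          rw [wDensity]
          convert add_two_mul_add_le_two_mul_sum
            (a := fun j => ‖iteratedFDeriv ℝ j f y‖ ^ 2 * Real.exp (2 * δ * y.1))
            (fun j => by positivity) hl using 1
          ring
  calc ‖iteratedFDeriv ℝ l f x‖ ^ 2 * Real.exp (2 * δ * x.1)
      ≤ (4 * ∫ y in Icc x.1 (x.1 + 1) ×ˢ Icc 0 1, e y) * Real.exp (2 * δ * x.1) :=
        mul_le_mul_of_nonneg_right hsquare (Real.exp_nonneg _)
    _ = 4 * ∫ y in Icc x.1 (x.1 + 1) ×ˢ Icc 0 1, e y * Real.exp (2 * δ * x.1) := by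
        rw [integral_mul_const]; ring
    _ ≤ 4 * ∫ y in Icc x.1 (x.1 + 1) ×ˢ Icc 0 1, 2 * wDensity k δ f y := by
        have hcont_left : Continuous fun y => e y * Real.exp (2 * δ * x.1) :=
          he.mul continuous_const
        have hcont_right : Continuous fun y => 2 * wDensity k δ f y :=
          continuous_const.mul hf.continuous_wDensity
        refine mul_le_mul_of_nonneg_left ?_ (by norm_num)
        exact setIntegral_mono_on (hcont_left.continuousOn.integrableOn_compact hcompact)
          (hcont_right.continuousOn.integrableOn_compact hcompact) hcompact.measurableSet hpointwise
    _ ≤ 8 * wNormSq k δ f := by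
        rw [integral_const_mul]
        linarith [hf.setIntegral_wDensity_Icc_prod_Icc_le hx]

end memW

section Product

variable {m k : ℕ} {δ σ : ℝ} {f g : ℝ × ℝ → ℝ}

theorem sq_norm_iteratedFDeriv_mul_norm_mul_exp_le (hf : memW m δ f) (hg : memW k σ g) (hm : 3 ≤ m)
    (hkm : k ≤ m) (hσ : 0 ≤ σ) (hσδ : σ ≤ δ) {i i' : ℕ} (hii' : i + i' ≤ k) {x : ℝ × ℝ}
    (hx : 0 < x.1) :
    (‖iteratedFDeriv ℝ i f x‖ * ‖iteratedFDeriv ℝ i' g x‖) ^ 2 * Real.exp (2 * δ * x.1)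
      ≤ 8 * (wNormSq k σ g * wDensity m δ f x + wNormSq m δ f * wDensity k σ g x) := by
  set F := ‖iteratedFDeriv ℝ i f x‖ ^ 2 * Real.exp (2 * δ * x.1)
  set G := ‖iteratedFDeriv ℝ i' g x‖ ^ 2 * Real.exp (2 * σ * x.1)
  have hFG : (‖iteratedFDeriv ℝ i f x‖ * ‖iteratedFDeriv ℝ i' g x‖) ^ 2 * Real.exp (2 * δ * x.1)
      ≤ F * G := by
    have h1 : 1 ≤ Real.exp (2 * σ * x.1) := Real.one_le_exp (by positivity)
    calc _ = F * ‖iteratedFDeriv ℝ i' g x‖ ^ 2 := by ring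
      _ ≤ F * G := by gcongr; exact le_mul_of_one_le_right (by positivity) h1
  have hF : F ≤ wDensity m δ f x := sq_norm_iteratedFDeriv_mul_exp_le_wDensity (by omega) δ f x
  have hG : G ≤ wDensity k σ g x := sq_norm_iteratedFDeriv_mul_exp_le_wDensity (by omega) σ g x
  have hNf := wNormSq_nonneg m δ f
  have hNg := wNormSq_nonneg k σ g
  have hρf := wDensity_nonneg m δ f x
  have hρg := wDensity_nonneg k σ g x
  rcases le_or_gt (i' + 2) k with hi' | hi'
  · have hGsup : G ≤ 8 * wNormSq k σ g := hg.sq_norm_iteratedFDeriv_mul_exp_le hσ hi' hx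
    nlinarith [mul_le_mul hF hGsup (by positivity) hρf]
  · have hFsup : F ≤ 8 * wNormSq m δ f :=
      hf.sq_norm_iteratedFDeriv_mul_exp_le (hσ.trans hσδ) (by omega) hx
    nlinarith [mul_le_mul hFsup hG (by positivity) (by positivity)]

theorem sq_norm_iteratedFDeriv_mul_mul_exp_le (hf : memW m δ f) (hg : memW k σ g) (hm : 3 ≤ m)
    (hkm : k ≤ m) (hσ : 0 ≤ σ) (hσδ : σ ≤ δ) {j : ℕ} (hj : j ≤ k) {x : ℝ × ℝ} (hx : 0 < x.1) :
    ‖iteratedFDeriv ℝ j (fun y => f y * g y) x‖ ^ 2 * Real.exp (2 * δ * x.1)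
      ≤ 4 ^ j * (8 * (wNormSq k σ g * wDensity m δ f x + wNormSq m δ f * wDensity k σ g x)) := by
  set Q := 8 * (wNormSq k σ g * wDensity m δ f x + wNormSq m δ f * wDensity k σ g x)
  have hQ : 0 ≤ Q := by
    have := wDensity_nonneg m δ f x; have := wDensity_nonneg k σ g x
    have := wNormSq_nonneg m δ f; have := wNormSq_nonneg k σ g
    positivity
  set E := Real.exp (δ * x.1)
  have hE : Real.exp (2 * δ * x.1) = E ^ 2 := by rw [sq, ← Real.exp_add]; ring_nf
  have hleibniz := norm_iteratedFDeriv_mul_le (hf.1.of_le (by exact_mod_cast hkm)) hg.1 x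
    (by exact_mod_cast hj)
  have hchoose : ∑ i ∈ Finset.range (j + 1), (j.choose i : ℝ) = 2 ^ j := by
    exact_mod_cast Nat.sum_range_choose j
  have hCS := Finset.sum_sq_le_sum_mul_sum_of_sq_le_mul (Finset.range (j + 1))
    (r := fun i => (j.choose i : ℝ) * ‖iteratedFDeriv ℝ i f x‖ * ‖iteratedFDeriv ℝ (j - i) g x‖ * E)
    (f := fun i => (j.choose i : ℝ)) (g := fun i => (j.choose i : ℝ) * Q)
    (fun _ _ => by positivity) (fun _ _ => by positivity) fun i hi => by
      have h := sq_norm_iteratedFDeriv_mul_norm_mul_exp_le hf hg hm hkm hσ hσδ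
        (i := i) (i' := j - i)
        (by have := Finset.mem_range_succ_iff.1 hi; omega) hx
      rw [hE] at h
      calc _ = (j.choose i : ℝ) ^ 2
            * ((‖iteratedFDeriv ℝ i f x‖ * ‖iteratedFDeriv ℝ (j - i) g x‖) ^ 2 * E ^ 2) := by ring
        _ ≤ (j.choose i : ℝ) ^ 2 * Q := by gcongr
        _ = _ := by ring
  have hsumQ : ∑ i ∈ Finset.range (j + 1), (j.choose i : ℝ) * Q = 2 ^ j * Q := by
    rw [← Finset.sum_mul, hchoose]
  rw [hchoose, hsumQ] at hCS
  calc _ = (‖iteratedFDeriv ℝ j (fun y => f y * g y) x‖ * E) ^ 2 := by rw [hE]; ring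
    _ ≤ (∑ i ∈ Finset.range (j + 1), (j.choose i : ℝ) * ‖iteratedFDeriv ℝ i f x‖
          * ‖iteratedFDeriv ℝ (j - i) g x‖ * E) ^ 2 := by
        rw [← Finset.sum_mul]
        exact pow_le_pow_left₀ (by positivity)
          (mul_le_mul_of_nonneg_right hleibniz (Real.exp_nonneg _)) 2
    _ ≤ 4 ^ j * Q := by
        refine hCS.trans_eq ?_
        rw [show (4 : ℝ) ^ j = 2 ^ j * 2 ^ j by rw [← mul_pow]; norm_num]
        ring

theorem integral_sq_norm_iteratedFDeriv_mul_mul_exp_le (hf : memW m δ f) (hg : memW k σ g)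
    (hm : 3 ≤ m) (hkm : k ≤ m) (hσ : 0 ≤ σ) (hσδ : σ ≤ δ) {j : ℕ} (hj : j ≤ k) :
    ∫ x in halfCylinder, ‖iteratedFDeriv ℝ j (fun y => f y * g y) x‖ ^ 2 * Real.exp (2 * δ * x.1)
      ≤ 4 ^ j * (16 * (wNormSq m δ f * wNormSq k σ g)) := by
  have hQ_int : IntegrableOn (fun x =>
      4 ^ j * (8 * (wNormSq k σ g * wDensity m δ f x + wNormSq m δ f * wDensity k σ g x)))
      halfCylinder :=
    (((hf.integrableOn_wDensity.const_mul _).add (hg.integrableOn_wDensity.const_mul _)).const_mul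
      _).const_mul _
  have hbound : ∀ x ∈ halfCylinder,
      ‖iteratedFDeriv ℝ j (fun y => f y * g y) x‖ ^ 2 * Real.exp (2 * δ * x.1)
        ≤ 4 ^ j * (8 * (wNormSq k σ g * wDensity m δ f x + wNormSq m δ f * wDensity k σ g x)) :=
    fun x hx => sq_norm_iteratedFDeriv_mul_mul_exp_le hf hg hm hkm hσ hσδ hj hx.1
  have hcont : Continuous fun x =>
      ‖iteratedFDeriv ℝ j (fun y => f y * g y) x‖ ^ 2 * Real.exp (2 * δ * x.1) :=
    ((((hf.1.of_le (by exact_mod_cast hkm)).mul hg.1).continuous_iteratedFDeriv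
      (by exact_mod_cast hj)).norm.pow 2).mul
      (Real.continuous_exp.comp (continuous_const.mul continuous_fst))
  have hP_int : IntegrableOn (fun x =>
      ‖iteratedFDeriv ℝ j (fun y => f y * g y) x‖ ^ 2 * Real.exp (2 * δ * x.1)) halfCylinder :=
    hQ_int.mono' hcont.aestronglyMeasurable.restrict <|
      (ae_restrict_iff' measurableSet_halfCylinder).2 <| ae_of_all _ fun x hx => by
        rw [Real.norm_of_nonneg (by positivity)]
        exact hbound x hx
  calc _ ≤ ∫ x in halfCylinder,
        4 ^ j * (8 * (wNormSq k σ g * wDensity m δ f x + wNormSq m δ f * wDensity k σ g x)) :=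
        setIntegral_mono_on hP_int hQ_int measurableSet_halfCylinder hbound
    _ = 4 ^ j * (16 * (wNormSq m δ f * wNormSq k σ g)) := by
        rw [integral_const_mul, integral_const_mul, integral_add
          (hf.integrableOn_wDensity.const_mul _) (hg.integrableOn_wDensity.const_mul _),
          integral_const_mul, integral_const_mul, hf.integral_wDensity, hg.integral_wDensity]
        ring

theorem wNormSq_mul_le (hf : memW m δ f) (hg : memW k σ g) (hm : 3 ≤ m) (hkm : k ≤ m)
    (hσ : 0 ≤ σ) (hσδ : σ ≤ δ) :
    wNormSq k δ (fun x => f x * g x)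
      ≤ (16 * ∑ j ∈ Finset.range (k + 1), (4 : ℝ) ^ j) * (wNormSq m δ f * wNormSq k σ g) := by
  rw [wNormSq, Finset.mul_sum, Finset.sum_mul]
  refine Finset.sum_le_sum fun j hj => ?_
  refine (integral_sq_norm_iteratedFDeriv_mul_mul_exp_le hf hg hm hkm hσ hσδ
    (Finset.mem_range_succ_iff.1 hj)).trans_eq ?_
  ring

end Product

theorem weighted_sobolev_banach_algebra_general
    (m k : ℕ) (δ σ : ℝ) (hm : 3 ≤ m) (hkm : k ≤ m)
    (hσ : 0 ≤ σ) (hσδ : σ ≤ δ) :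
    ∃ C : ℝ, ∀ f g : ℝ × ℝ → ℝ, memW m δ f → memW k σ g →
      Real.sqrt (wNormSq k δ (fun x => f x * g x))
        ≤ C * Real.sqrt (wNormSq m δ f) * Real.sqrt (wNormSq k σ g) := by
  refine ⟨Real.sqrt (16 * ∑ j ∈ Finset.range (k + 1), (4 : ℝ) ^ j), fun f g hf hg => ?_⟩
  calc Real.sqrt (wNormSq k δ (fun x => f x * g x))
      ≤ Real.sqrt ((16 * ∑ j ∈ Finset.range (k + 1), (4 : ℝ) ^ j)
          * (wNormSq m δ f * wNormSq k σ g)) :=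
        Real.sqrt_le_sqrt (wNormSq_mul_le hf hg hm hkm hσ hσδ)
    _ = _ := by
        rw [Real.sqrt_mul (by positivity), Real.sqrt_mul (wNormSq_nonneg m δ f), mul_assoc]

theorem weighted_sobolev_banach_algebra
    (m k : ℕ) (δ σ : ℝ) (hm : 3 ≤ m) (hk : 2 ≤ k) (hkm : k ≤ m)
    (hσ : 0 ≤ σ) (hσδ : σ ≤ δ) :
    ∃ C : ℝ, ∀ f g : ℝ × ℝ → ℝ, memW m δ f → memW k σ g →
      Real.sqrt (wNormSq k δ (fun x => f x * g x))
        ≤ C * Real.sqrt (wNormSq m δ f) * Real.sqrt (wNormSq k σ g) :=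
  weighted_sobolev_banach_algebra_general m k δ σ hm hkm hσ hσδ
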